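/- arXiv:2501.19388 — 4 statements merged into one kernel-verified Lean document; each statement's English description precedes it below -/
import Mathlib

section
/- Consider a finite rooted tree where each node v has a set of children ch(v) and a reward function θ^v : A × A^{ch(v)} → ℝ over a finite action set A. Define by induction from the leaves: μ*(v)(a) = max over children-action tuples b of [θ^v(a, b) - ∑_{w ∈ ch(v)} (max_{b'} μ*(w)(b') - μ*(w)(b_w))] (for leaves, μ*(v)(a) = θ^v(a)). Then ∑_{v ∈ V} max_{a} μ*(v)(a) = max over all joint action assignments (a^v)_{v∈V} of ∑_{v ∈ V} θ^v(a^v, a^{ch(v)}). -/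
/-!
Write `M w = max μ*(w)` and `τ_w(b) = M w - μ*(w)(b)`. The recursion says that for every joint
action `σ` and node `v`, `θ^v(σ v, σ) ≤ μ*(v)(σ v) + ∑_{w ∈ ch v} τ_w(σ w)`. Summed over the
tree, every non-root node appears once as a child, so the right-hand sides telescope to
`∑_v M v - τ_r(σ r) ≤ ∑_v M v`. Conversely, choosing a best action at the root and then, top
down, the maximizing children tuple at every node makes each inequality an equality and
`τ_r(σ r) = 0`.
-/

open Finset

section ChildSets

variable {V : Type*} {ch : V → Finset V} {r : V}

theorem pairwiseDisjoint_of_unique_parent (hroot : ∀ u, r ∉ ch u)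
    (hparent : ∀ v, v ≠ r → ∃! u, v ∈ ch u) : (Set.univ : Set V).PairwiseDisjoint ch := by
  intro u _ u' _ hne
  refine disjoint_left.2 fun w hw hw' => hne ?_
  exact (hparent w fun h => hroot u (h ▸ hw)).unique hw hw'

variable [Fintype V] [DecidableEq V]

theorem biUnion_eq_erase_of_unique_parent (hroot : ∀ u, r ∉ ch u)
    (hparent : ∀ v, v ≠ r → ∃! u, v ∈ ch u) : univ.biUnion ch = univ.erase r := by
  ext w
  simp only [mem_biUnion, mem_univ, true_and, mem_erase, and_true]
  exact ⟨fun ⟨u, hu⟩ h => hroot u (h ▸ hu), fun h => (hparent w h).exists⟩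

theorem sum_sum_children {β : Type*} [AddCommMonoid β] (hroot : ∀ u, r ∉ ch u)
    (hparent : ∀ v, v ≠ r → ∃! u, v ∈ ch u) (g : V → β) :
    ∑ v, ∑ w ∈ ch v, g w = ∑ w ∈ univ.erase r, g w := by
  rw [← biUnion_eq_erase_of_unique_parent hroot hparent,
    sum_biUnion (by simpa using pairwiseDisjoint_of_unique_parent hroot hparent)]

theorem sum_add_sum_children_sub {β : Type*} [AddCommGroup β] (hroot : ∀ u, r ∉ ch u)
    (hparent : ∀ v, v ≠ r → ∃! u, v ∈ ch u) (f g : V → β) :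
    ∑ v, (f v + ∑ w ∈ ch v, (g w - f w)) = ∑ v, g v - (g r - f r) := by
  rw [sum_add_distrib, sum_sum_children hroot hparent, sum_sub_distrib,
    ← add_sum_erase _ f (mem_univ r), ← add_sum_erase _ g (mem_univ r)]
  abel

end ChildSets

section TopDown

variable {V : Type*} [DecidableEq V] (ch : V → Finset V) (r : V)

noncomputable def parent (hparent : ∀ v, v ≠ r → ∃! u, v ∈ ch u) (v : V) : V :=
  if h : v = r then r else (hparent v h).exists.choose

variable {ch r}

theorem mem_ch_parent {hparent : ∀ v, v ≠ r → ∃! u, v ∈ ch u} {v : V} (h : v ≠ r) :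
    v ∈ ch (parent ch r hparent v) := by
  rw [parent, dif_neg h]
  exact (hparent v h).exists.choose_spec

theorem parent_eq_of_mem_ch {hparent : ∀ v, v ≠ r → ∃! u, v ∈ ch u} {u v : V} (h : v ≠ r)
    (hv : v ∈ ch u) : parent ch r hparent v = u :=
  (hparent v h).unique (mem_ch_parent h) hv

variable (ch r) {α : Type*}

noncomputable def topDown [Fintype V] (rank : V → ℕ) (hrank : ∀ v, ∀ w ∈ ch v, rank w < rank v)
    (hparent : ∀ v, v ≠ r → ∃! u, v ∈ ch u) (a₀ : α) (next : V → α → V → α) (v : V) : α :=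
  if h : v = r then a₀
  else next (parent ch r hparent v) (topDown rank hrank hparent a₀ next (parent ch r hparent v)) v
termination_by univ.sup rank - rank v
decreasing_by
  have := hrank _ _ (mem_ch_parent (hparent := hparent) h)
  have := le_sup (f := rank) (mem_univ (parent ch r hparent v))
  omega

variable [Fintype V] {ch r} {rank : V → ℕ} {hrank : ∀ v, ∀ w ∈ ch v, rank w < rank v}
  {hparent : ∀ v, v ≠ r → ∃! u, v ∈ ch u} {a₀ : α} {next : V → α → V → α}

theorem topDown_root : topDown ch r rank hrank hparent a₀ next r = a₀ := by
  rw [topDown, dif_pos rfl]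

theorem topDown_of_mem_ch (hroot : ∀ u, r ∉ ch u) {u v : V} (hv : v ∈ ch u) :
    topDown ch r rank hrank hparent a₀ next v
      = next u (topDown ch r rank hrank hparent a₀ next u) v := by
  have hvr : v ≠ r := fun h => hroot u (h ▸ hv)
  rw [topDown, dif_neg hvr, parent_eq_of_mem_ch hvr hv]

end TopDown

section Transfers

variable {V A : Type*} [Fintype V] [DecidableEq V] [Fintype A] [Nonempty A]

noncomputable def optimalIncentive (μ : V → A → ℝ) (w : V) (b : A) : ℝ :=
  univ.sup' univ_nonempty (μ w) - μ w b

noncomputable def netUtility (ch : V → Finset V) (θ : V → A → (V → A) → ℝ) (μ : V → A → ℝ)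
    (v : V) (a : A) (b : V → A) : ℝ :=
  θ v a b - ∑ w ∈ ch v, optimalIncentive μ w (b w)

def welfare (θ : V → A → (V → A) → ℝ) (σ : V → A) : ℝ :=
  ∑ v, θ v (σ v) σ

variable {ch : V → Finset V} {r : V} {θ : V → A → (V → A) → ℝ} {μ : V → A → ℝ}

theorem sum_add_sum_optimalIncentive (hroot : ∀ u, r ∉ ch u)
    (hparent : ∀ v, v ≠ r → ∃! u, v ∈ ch u) (σ : V → A) :
    ∑ v, (μ v (σ v) + ∑ w ∈ ch v, optimalIncentive μ w (σ w))
      = ∑ v, univ.sup' univ_nonempty (μ v) - optimalIncentive μ r (σ r) :=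
  sum_add_sum_children_sub hroot hparent (fun v => μ v (σ v))
    (fun v => univ.sup' univ_nonempty (μ v))

theorem welfare_le_sum_sup' (hroot : ∀ u, r ∉ ch u) (hparent : ∀ v, v ≠ r → ∃! u, v ∈ ch u)
    (hμ : ∀ v a b, netUtility ch θ μ v a b ≤ μ v a) (σ : V → A) :
    welfare θ σ ≤ ∑ v, univ.sup' univ_nonempty (μ v) := by
  have hnode : ∀ v, θ v (σ v) σ ≤ μ v (σ v) + ∑ w ∈ ch v, optimalIncentive μ w (σ w) :=
    fun v => sub_le_iff_le_add.1 (hμ v (σ v) σ)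
  have hroot_incentive : 0 ≤ optimalIncentive μ r (σ r) :=
    sub_nonneg.2 (le_sup' (μ r) (mem_univ _))
  calc welfare θ σ ≤ ∑ v, (μ v (σ v) + ∑ w ∈ ch v, optimalIncentive μ w (σ w)) :=
        sum_le_sum fun v _ => hnode v
    _ = ∑ v, univ.sup' univ_nonempty (μ v) - optimalIncentive μ r (σ r) :=
        sum_add_sum_optimalIncentive hroot hparent σ
    _ ≤ ∑ v, univ.sup' univ_nonempty (μ v) := sub_le_self _ hroot_incentive

theorem exists_welfare_eq_sum_sup' (rank : V → ℕ) (hrank : ∀ v, ∀ w ∈ ch v, rank w < rank v)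
    (hroot : ∀ u, r ∉ ch u) (hparent : ∀ v, v ≠ r → ∃! u, v ∈ ch u)
    (hθ : ∀ v a (f g : V → A), (∀ w ∈ ch v, f w = g w) → θ v a f = θ v a g)
    (hμ : ∀ v a, μ v a = univ.sup' univ_nonempty (netUtility ch θ μ v a)) :
    ∃ σ, welfare θ σ = ∑ v, univ.sup' univ_nonempty (μ v) := by
  obtain ⟨a₀, -, ha₀⟩ := exists_mem_eq_sup' univ_nonempty (μ r)
  choose best _ hbest using fun v a => exists_mem_eq_sup' univ_nonempty (netUtility ch θ μ v a)
  set σ := topDown ch r rank hrank hparent a₀ best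
  have hchildren : ∀ v, ∀ w ∈ ch v, σ w = best v (σ v) w :=
    fun v w hw => topDown_of_mem_ch hroot hw
  have hnode : ∀ v, θ v (σ v) σ = μ v (σ v) + ∑ w ∈ ch v, optimalIncentive μ w (σ w) := by
    intro v
    have hsum : ∑ w ∈ ch v, optimalIncentive μ w (σ w)
        = ∑ w ∈ ch v, optimalIncentive μ w (best v (σ v) w) :=
      sum_congr rfl fun w hw => by rw [hchildren v w hw]
    rw [hμ v (σ v), hbest, netUtility, hθ v _ _ _ (hchildren v), hsum, sub_add_cancel]
  have hroot_incentive : optimalIncentive μ r (σ r) = 0 := by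
    rw [optimalIncentive, show σ r = a₀ from topDown_root, ha₀, sub_self]
  refine ⟨σ, ?_⟩
  rw [welfare, sum_congr rfl fun v _ => hnode v, sum_add_sum_optimalIncentive hroot hparent,
    hroot_incentive, sub_zero]

end Transfers

/-- Social welfare identity for a finite rooted tree with transfers: the sum over nodes of the
best net utility (after paying optimal incentives) equals the maximal social welfare. -/
theorem transfers_restore_efficiency
    {V A : Type*} [Fintype V] [DecidableEq V] [Fintype A] [Nonempty A]
    (ch : V → Finset V) (r : V) (rank : V → ℕ)
    (hrank : ∀ v, ∀ w ∈ ch v, rank w < rank v)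
    (hroot : ∀ u, r ∉ ch u)
    (hparent : ∀ v, v ≠ r → ∃! u, v ∈ ch u)
    (θ : V → A → (V → A) → ℝ)
    (hθ : ∀ v a (f g : V → A), (∀ w ∈ ch v, f w = g w) → θ v a f = θ v a g)
    (μs : V → A → ℝ)
    (hμ : ∀ v a, μs v a = Finset.univ.sup' Finset.univ_nonempty (fun b : V → A =>
        θ v a b - ∑ w ∈ ch v,
          (Finset.univ.sup' Finset.univ_nonempty (fun a' : A => μs w a') - μs w (b w)))) :
    ∑ v : V, Finset.univ.sup' Finset.univ_nonempty (fun a : A => μs v a)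
      = Finset.univ.sup' Finset.univ_nonempty (fun σ : V → A => ∑ v : V, θ v (σ v) σ) := by
  have hμ' : ∀ v a, μs v a = univ.sup' univ_nonempty (netUtility ch θ μs v a) := hμ
  have hsuper : ∀ v a b, netUtility ch θ μs v a b ≤ μs v a :=
    fun v a b => (hμ' v a).symm ▸ le_sup' _ (mem_univ b)
  obtain ⟨σ, hσ⟩ := exists_welfare_eq_sum_sup' rank hrank hroot hparent hθ hμ'
  refine le_antisymm ?_ (sup'_le _ _ fun σ _ => welfare_le_sum_sup' hroot hparent hsuper σ)
  exact hσ ▸ le_sup' (welfare θ) (mem_univ σ)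
end

section
/- In the two-case dichotomy above, for any (p_t) ∈ [0,1]^T there exists J ⊆ {1,…,T} with ∑_{t∈J} p_t ≤ T^κ such that |J| + ∑_{t∉J} p_t ≥ T^{(κ+1)/2} - T^κ. -/
/-- Regret propagation lower bound: for any payments p_t ∈ [0,1], the child can pick a rejection
set J with ∑_{t∈J} p_t ≤ T^κ while forcing parent regret |J| + ∑_{t∉J} p_t ≥ T^{(κ+1)/2} − T^κ. -/
theorem regret_propagation_lower_bound (κ : ℝ) (hκ0 : 0 ≤ κ) (hκ1 : κ < 1)
    (T : ℕ) (hT : 1 ≤ T) (p : ℕ → ℝ)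
    (hp : ∀ t ∈ Finset.Icc 1 T, p t ∈ Set.Icc (0 : ℝ) 1) :
    ∃ J ⊆ Finset.Icc 1 T,
      (∑ t ∈ J, p t ≤ (T : ℝ) ^ κ) ∧
      (T : ℝ) ^ ((κ + 1) / 2) - (T : ℝ) ^ κ ≤
        (J.card : ℝ) + ∑ t ∈ (Finset.Icc 1 T) \ J, p t := by
  have hA1 : (1 : ℝ) ≤ (T : ℝ) := by exact_mod_cast hT
  have hA0 : (0 : ℝ) < (T : ℝ) := lt_of_lt_of_le one_pos hA1
  have hκpow1 : (1 : ℝ) ≤ (T : ℝ) ^ κ := Real.one_le_rpow hA1 hκ0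
  have hx0 : 0 ≤ (T : ℝ) ^ ((κ + 1) / 2) - (T : ℝ) ^ κ := by
    have : (T : ℝ) ^ κ ≤ (T : ℝ) ^ ((κ + 1) / 2) :=
      Real.rpow_le_rpow_of_exponent_le hA1 (by linarith)
    linarith
  -- the threshold τ, made opaque
  obtain ⟨τ, hτ0, hmul1, hmul2⟩ :
      ∃ τ : ℝ, 0 < τ ∧ τ * (T : ℝ) ^ ((κ + 1) / 2) = (T : ℝ) ^ κ ∧
        τ * (T : ℝ) = (T : ℝ) ^ ((κ + 1) / 2) := by
    refine ⟨(T : ℝ) ^ (-((1 - κ) / 2)), Real.rpow_pos_of_pos hA0 _, ?_, ?_⟩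
    · rw [← Real.rpow_add hA0]; ring_nf
    · nth_rewrite 2 [(Real.rpow_one (T : ℝ)).symm]
      rw [← Real.rpow_add hA0]; ring_nf
  -- the target cardinality m, made opaque
  obtain ⟨m, hm1, hm2, hm3⟩ :
      ∃ m : ℕ, (T : ℝ) ^ ((κ + 1) / 2) - (T : ℝ) ^ κ ≤ (m : ℝ) ∧
        (m : ℝ) ≤ (T : ℝ) ^ ((κ + 1) / 2) ∧
        ∀ n : ℕ, n < m → (n : ℝ) < (T : ℝ) ^ ((κ + 1) / 2) - (T : ℝ) ^ κ := by
    refine ⟨⌈(T : ℝ) ^ ((κ + 1) / 2) - (T : ℝ) ^ κ⌉₊, Nat.le_ceil _, ?_, ?_⟩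
    · have := Nat.ceil_lt_add_one hx0
      linarith
    · exact fun n hn => Nat.lt_ceil.mp hn
  set S : Finset ℕ := Finset.Icc 1 T with hS
  set Sm : Finset ℕ := S.filter (fun t => p t < τ) with hSm
  by_cases hcase : m ≤ Sm.card
  · -- many small payments: take J ⊆ Sm with |J| = m
    obtain ⟨J, hJSm, hJcard⟩ := Finset.exists_subset_card_eq hcase
    have hJS : J ⊆ S := hJSm.trans (Finset.filter_subset _ _)
    refine ⟨J, hJS, ?_, ?_⟩
    · calc ∑ t ∈ J, p t ≤ ∑ t ∈ J, τ := by
            refine Finset.sum_le_sum fun t ht => ?_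
            have := hJSm ht
            rw [hSm, Finset.mem_filter] at this
            exact le_of_lt this.2
        _ = (m : ℝ) * τ := by rw [Finset.sum_const, hJcard]; ring
        _ ≤ (T : ℝ) ^ ((κ + 1) / 2) * τ := mul_le_mul_of_nonneg_right hm2 hτ0.le
        _ = (T : ℝ) ^ κ := by rw [mul_comm]; exact hmul1
    · have h2 : 0 ≤ ∑ t ∈ S \ J, p t := by
        refine Finset.sum_nonneg fun t ht => ?_
        exact (hp t (Finset.mem_sdiff.mp ht).1).1
      rw [hJcard]
      linarith
  · -- few small payments: take J = ∅
    push_neg at hcase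
    have hn : (Sm.card : ℝ) < (T : ℝ) ^ ((κ + 1) / 2) - (T : ℝ) ^ κ :=
      hm3 _ hcase
    refine ⟨∅, Finset.empty_subset _, by rw [Finset.sum_empty]; linarith, ?_⟩
    set B : Finset ℕ := S.filter (fun t => ¬ p t < τ) with hB
    have hcards : Sm.card + B.card = S.card :=
      Finset.card_filter_add_card_filter_not _
    have hScard : S.card = T := Nat.card_Icc 1 T ▸ by simp [hS]
    have hBcard : (B.card : ℝ) = (T : ℝ) - (Sm.card : ℝ) := by
      have h : B.card = T - Sm.card := by omega
      rw [h, Nat.cast_sub (by omega)]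
    have hsumB : τ * (B.card : ℝ) ≤ ∑ t ∈ B, p t := by
      have := Finset.card_nsmul_le_sum B p τ (fun t ht => by
        rw [hB, Finset.mem_filter] at ht; linarith [ht.2])
      simpa [nsmul_eq_mul, mul_comm] using this
    have hsumS : ∑ t ∈ B, p t ≤ ∑ t ∈ S, p t := by
      refine Finset.sum_le_sum_of_subset_of_nonneg (Finset.filter_subset _ _) ?_
      exact fun t ht _ => (hp t ht).1
    have hbound : (T : ℝ) ^ ((κ + 1) / 2) - (T : ℝ) ^ κ ≤ τ * (B.card : ℝ) := by
      have hle : (T : ℝ) - (T : ℝ) ^ ((κ + 1) / 2) ≤ (B.card : ℝ) := by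
        rw [hBcard]; linarith
      calc (T : ℝ) ^ ((κ + 1) / 2) - (T : ℝ) ^ κ
          = τ * ((T : ℝ) - (T : ℝ) ^ ((κ + 1) / 2)) := by
            rw [mul_sub, hmul1, hmul2]
        _ ≤ τ * (B.card : ℝ) := mul_le_mul_of_nonneg_left hle hτ0.le
    simp only [Finset.card_empty, Nat.cast_zero, zero_add, Finset.sdiff_empty]
    linarith
end

section
/- Under the same setting, if the offered transfer satisfies τ ≤ τ*(b) − 1/T^β, then some action a ≠ b satisfies w(a) ≥ w(b) + τ + 1/T^β, so each round where the agent plays b incurs a shortfall of at least 1/T^β; hence if the agent's total shortfall over N = ⌈T^α⌉ rounds is at most C·N^κ, the number of rounds where the agent plays b is at most C·N^{κ+β/α}, i.e., N₀ ≥ N − C·N^{κ+β/α}. -/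
open Finset

theorem exists_ne_add_le_of_le_sup'_sub {ι : Type*} {s : Finset ι} (hs : s.Nonempty)
    (w : ι → ℝ) (b : ι) {τ δ : ℝ} (hτδ : 0 < τ + δ) (hτ : τ ≤ s.sup' hs w - w b - δ) :
    ∃ a ∈ s, a ≠ b ∧ w b + τ + δ ≤ w a := by
  obtain ⟨a, ha, hmax⟩ := s.exists_mem_eq_sup' hs w
  have hwa : w b + τ + δ ≤ w a := by linarith
  refine ⟨a, ha, ?_, hwa⟩
  rintro rfl
  linarith

theorem card_filter_mul_le_sum {ι : Type*} (s : Finset ι) (p : ι → Prop) [DecidablePred p]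
    (f : ι → ℝ) {δ : ℝ} (hf : ∀ i ∈ s, 0 ≤ f i) (hδ : ∀ i ∈ s, p i → δ ≤ f i) :
    (#(s.filter p) : ℝ) * δ ≤ ∑ i ∈ s, f i :=
  calc (#(s.filter p) : ℝ) * δ = #(s.filter p) • δ := (nsmul_eq_mul _ _).symm
    _ ≤ ∑ i ∈ s.filter p, f i :=
      card_nsmul_le_sum _ _ _ fun i hi ↦ hδ i (mem_filter.1 hi).1 (mem_filter.1 hi).2
    _ ≤ ∑ i ∈ s, f i := sum_le_sum_of_subset_of_nonneg (filter_subset _ _) fun i hi _ ↦ hf i hi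

theorem rpow_le_natCeil_rpow_div {T α β : ℝ} (hT : 0 ≤ T) (hα : 0 < α) (hβ : 0 ≤ β) :
    T ^ β ≤ (⌈T ^ α⌉₊ : ℝ) ^ (β / α) :=
  calc T ^ β = (T ^ α) ^ (β / α) := by rw [← Real.rpow_mul hT, mul_div_cancel₀ _ hα.ne']
    _ ≤ (⌈T ^ α⌉₊ : ℝ) ^ (β / α) :=
      Real.rpow_le_rpow (by positivity) (Nat.le_ceil _) (div_nonneg hβ hα.le)

theorem classification_lower_general {A : Type*} [Fintype A] [Nonempty A] [DecidableEq A]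
    (C κ α β T : ℝ) (hα : 0 < α) (hβ : 0 < β)
    (hT : 1 ≤ T)
    (w : A → ℝ) (b : A) (τ : ℝ) (act : ℕ → A) (hτ0 : 0 ≤ τ)
    (hτ : τ ≤ Finset.univ.sup' Finset.univ_nonempty w - w b - 1 / T ^ β) :
    (∃ a : A, a ≠ b ∧ w b + τ + 1 / T ^ β ≤ w a) ∧
    ((∑ l ∈ Finset.Icc 1 ⌈T ^ α⌉₊,
        (Finset.univ.sup' Finset.univ_nonempty (fun a => w a + if a = b then τ else 0)
          - (w (act l) + if act l = b then τ else 0))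
      ≤ C * ((⌈T ^ α⌉₊ : ℝ)) ^ κ) →
      (((Finset.Icc 1 ⌈T ^ α⌉₊).filter (fun l => act l = b)).card : ℝ)
          ≤ C * ((⌈T ^ α⌉₊ : ℝ)) ^ (κ + β / α) ∧
        (⌈T ^ α⌉₊ : ℝ) - C * ((⌈T ^ α⌉₊ : ℝ)) ^ (κ + β / α)
          ≤ (((Finset.Icc 1 ⌈T ^ α⌉₊).filter (fun l => act l ≠ b)).card : ℝ)) := by
  set N := ⌈T ^ α⌉₊
  set u : A → ℝ := fun a => w a + if a = b then τ else 0
  have hTβ : 0 < T ^ β := by positivity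
  obtain ⟨a, -, hab, hwa⟩ :=
    exists_ne_add_le_of_le_sup'_sub univ_nonempty w b (by positivity) hτ
  refine ⟨⟨a, hab, hwa⟩, fun hsum => ?_⟩
  have hgap : 1 / T ^ β ≤ univ.sup' univ_nonempty u - u b := by
    have hua : u a ≤ univ.sup' univ_nonempty u := le_sup' u (mem_univ a)
    simp only [u, if_neg hab, ↓reduceIte, add_zero] at hua ⊢
    linarith
  have hkey : (#((Icc 1 N).filter (fun l => act l = b)) : ℝ) * (1 / T ^ β) ≤ C * (N : ℝ) ^ κ :=
    (card_filter_mul_le_sum _ _ _ (fun l _ ↦ sub_nonneg.2 (le_sup' u (mem_univ _)))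
      fun l _ hl ↦ hl ▸ hgap).trans hsum
  have hN : (0 : ℝ) < N := Nat.cast_pos.2 (Nat.ceil_pos.2 (by positivity))
  have hcard : (#((Icc 1 N).filter (fun l => act l = b)) : ℝ) ≤ C * (N : ℝ) ^ (κ + β / α) :=
    calc (#((Icc 1 N).filter (fun l => act l = b)) : ℝ) ≤ C * (N : ℝ) ^ κ * T ^ β := by
          rwa [mul_one_div, div_le_iff₀ hTβ] at hkey
      _ ≤ C * (N : ℝ) ^ κ * (N : ℝ) ^ (β / α) :=
          mul_le_mul_of_nonneg_left (rpow_le_natCeil_rpow_div (by positivity) hα hβ.le)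
            ((by positivity : (0 : ℝ) ≤ _ * (1 / T ^ β)).trans hkey)
      _ = C * (N : ℝ) ^ (κ + β / α) := by rw [mul_assoc, ← Real.rpow_add hN]
  have hsplit : (#((Icc 1 N).filter (fun l => act l = b)) : ℝ)
      + #((Icc 1 N).filter (fun l => act l ≠ b)) = N := by
    rw [← Nat.cast_add, card_filter_add_card_filter_not, Nat.card_Icc, Nat.add_sub_cancel]
  exact ⟨hcard, by linarith⟩

/-- Binary search classification, lower branch: if the transfer is at most τ*(b) − 1/T^β, then
some action a ≠ b beats b by at least 1/T^β, so under the shortfall bound C·N^κ the number of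
rounds where the agent plays b is at most C·N^{κ+β/α}; hence N₀ ≥ N − C·N^{κ+β/α}. -/
theorem classification_lower {A : Type*} [Fintype A] [Nonempty A] [DecidableEq A]
    (C κ α β T : ℝ) (hC : 0 < C) (hκ0 : 0 ≤ κ) (hκ1 : κ < 1) (hα : 0 < α) (hβ : 0 < β)
    (hβα : β < α * (1 - κ)) (hT : 1 ≤ T)
    (w : A → ℝ) (b : A) (τ : ℝ) (act : ℕ → A) (hτ0 : 0 ≤ τ)
    (hτ : τ ≤ Finset.univ.sup' Finset.univ_nonempty w - w b - 1 / T ^ β) :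
    (∃ a : A, a ≠ b ∧ w b + τ + 1 / T ^ β ≤ w a) ∧
    ((∑ l ∈ Finset.Icc 1 ⌈T ^ α⌉₊,
        (Finset.univ.sup' Finset.univ_nonempty (fun a => w a + if a = b then τ else 0)
          - (w (act l) + if act l = b then τ else 0))
      ≤ C * ((⌈T ^ α⌉₊ : ℝ)) ^ κ) →
      (((Finset.Icc 1 ⌈T ^ α⌉₊).filter (fun l => act l = b)).card : ℝ)
          ≤ C * ((⌈T ^ α⌉₊ : ℝ)) ^ (κ + β / α) ∧
        (⌈T ^ α⌉₊ : ℝ) - C * ((⌈T ^ α⌉₊ : ℝ)) ^ (κ + β / α)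
          ≤ (((Finset.Icc 1 ⌈T ^ α⌉₊).filter (fun l => act l ≠ b)).card : ℝ)) :=
  classification_lower_general C κ α β T hα hβ hT w b τ act hτ0 hτ
end

section
/- Combining both branches: with the same hypotheses, if the number of non-acceptance rounds satisfies C·N^{κ+β/α} < N₀ < N − C·N^{κ+β/α} (conditionally on the agent's shortfall bound holding), then |τ − τ*(b)| ≤ 1/T^β. -/
/-!
Let `ε = 1/T^β`. If `τ` overshoots `τ*(b)` by more than `ε`, every round in which the agent
does not take `b` costs him at least `ε` of utility; if `τ` undershoots by more than `ε`,
every round in which he does take `b` does. Either way more than `C·N^{κ+β/α}` rounds cost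
at least `ε` each, a total exceeding `C·N^{κ+β/α}/T^β ≥ C·N^κ` because `N ≥ T^α`,
contradicting the shortfall bound.
-/

open Finset

theorem card_mul_le_of_sum_le {ι : Type*} {s t : Finset ι} {f : ι → ℝ} {ε B : ℝ}
    (hst : s ⊆ t) (hf : ∀ i ∈ t, 0 ≤ f i) (hs : ∀ i ∈ s, ε ≤ f i)
    (hsum : ∑ i ∈ t, f i ≤ B) : s.card * ε ≤ B :=
  calc s.card * ε ≤ ∑ i ∈ s, f i := by simpa using card_nsmul_le_sum s f ε hs
    _ ≤ ∑ i ∈ t, f i := sum_le_sum_of_subset_of_nonneg hst fun i hi _ => hf i hi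
    _ ≤ B := hsum

theorem rpow_le_rpow_add_div_div_rpow {N T α β : ℝ} (κ : ℝ) (hT : 1 ≤ T) (hα : 0 < α)
    (hβ : 0 ≤ β) (hN : T ^ α ≤ N) : N ^ κ ≤ N ^ (κ + β / α) / T ^ β := by
  have hT0 : 0 < T := zero_lt_one.trans_le hT
  have hN0 : 0 < N := (Real.one_le_rpow hT hα.le).trans_lt' zero_lt_one |>.trans_le hN
  have hTβ : T ^ β ≤ N ^ (β / α) :=
    calc T ^ β = (T ^ α) ^ (β / α) := by rw [← Real.rpow_mul hT0.le, mul_div_cancel₀ β hα.ne']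
      _ ≤ N ^ (β / α) := by gcongr
  rw [Real.rpow_add hN0, le_div_iff₀ (by positivity)]
  gcongr

section Contract

variable {A : Type*} [Fintype A] [Nonempty A] [DecidableEq A]

def contractUtility (w : A → ℝ) (b : A) (τ : ℝ) (a : A) : ℝ := w a + if a = b then τ else 0

variable (w : A → ℝ) (b : A) (τ : ℝ)

theorem contractUtility_le_sup' (a : A) :
    contractUtility w b τ a ≤ univ.sup' univ_nonempty (contractUtility w b τ) :=
  le_sup' _ (mem_univ a)

theorem sub_le_sup'_sub_contractUtility_of_ne {a : A} (ha : a ≠ b) :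
    τ - (univ.sup' univ_nonempty w - w b) ≤
      univ.sup' univ_nonempty (contractUtility w b τ) - contractUtility w b τ a := by
  have hb := contractUtility_le_sup' w b τ b
  have ha' : w a ≤ univ.sup' univ_nonempty w := le_sup' w (mem_univ a)
  simp only [contractUtility, if_neg ha, ite_true] at hb ⊢
  linarith

theorem sub_le_sup'_sub_contractUtility_self (hτ : 0 ≤ τ) :
    univ.sup' univ_nonempty w - w b - τ ≤
      univ.sup' univ_nonempty (contractUtility w b τ) - contractUtility w b τ b := by
  have hw : univ.sup' univ_nonempty w ≤ univ.sup' univ_nonempty (contractUtility w b τ) :=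
    sup'_mono_fun fun a _ => le_add_of_nonneg_right (by split_ifs <;> simp [hτ])
  simp only [contractUtility, ite_true]
  linarith

end Contract

theorem classification_combined_general {A : Type*} [Fintype A] [Nonempty A] [DecidableEq A]
    (C κ α β T : ℝ) (hC : 0 < C) (hα : 0 < α) (hβ : 0 < β) (hT : 1 ≤ T)
    (w : A → ℝ) (b : A) (τ : ℝ) (act : ℕ → A) (hτ0 : 0 ≤ τ)
    (hshort : ∑ l ∈ Finset.Icc 1 ⌈T ^ α⌉₊,
        (Finset.univ.sup' Finset.univ_nonempty (fun a => w a + if a = b then τ else 0)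
          - (w (act l) + if act l = b then τ else 0))
      ≤ C * ((⌈T ^ α⌉₊ : ℝ)) ^ κ)
    (hN0lo : C * ((⌈T ^ α⌉₊ : ℝ)) ^ (κ + β / α)
      < (((Finset.Icc 1 ⌈T ^ α⌉₊).filter (fun l => act l ≠ b)).card : ℝ))
    (hN0hi : (((Finset.Icc 1 ⌈T ^ α⌉₊).filter (fun l => act l ≠ b)).card : ℝ)
      < (⌈T ^ α⌉₊ : ℝ) - C * ((⌈T ^ α⌉₊ : ℝ)) ^ (κ + β / α)) :
    |τ - (Finset.univ.sup' Finset.univ_nonempty w - w b)| ≤ 1 / T ^ β := by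
  set N := ⌈T ^ α⌉₊
  set u := contractUtility w b τ
  set S := univ.sup' univ_nonempty u
  have hε : 0 < 1 / T ^ β := by have := zero_lt_one.trans_le hT; positivity
  have hfew : ∀ s ⊆ Icc 1 N, (∀ l ∈ s, 1 / T ^ β ≤ S - u (act l)) →
      (s.card : ℝ) ≤ C * (N : ℝ) ^ (κ + β / α) := fun s hs hreg => by
    refine le_of_mul_le_mul_right ?_ hε
    calc (s.card : ℝ) * (1 / T ^ β)
        ≤ C * (N : ℝ) ^ κ := card_mul_le_of_sum_le hs
          (fun l _ => sub_nonneg.2 (contractUtility_le_sup' w b τ _)) hreg hshort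
      _ ≤ C * (N : ℝ) ^ (κ + β / α) * (1 / T ^ β) := by
          rw [mul_assoc, mul_one_div]
          exact mul_le_mul_of_nonneg_left
            (rpow_le_rpow_add_div_div_rpow κ hT hα hβ.le (Nat.le_ceil _)) hC.le
  have hcard : (((Icc 1 N).filter (fun l => act l = b)).card : ℝ) =
      N - ((Icc 1 N).filter (fun l => act l ≠ b)).card := by
    rw [eq_sub_iff_add_eq, ← Nat.cast_add, card_filter_add_card_filter_not, Nat.card_Icc,
      Nat.add_sub_cancel]
  rw [abs_sub_le_iff]
  constructor
  · by_contra! hover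
    refine (hfew _ (filter_subset _ _) fun l hl => ?_).not_gt hN0lo
    exact hover.le.trans (sub_le_sup'_sub_contractUtility_of_ne w b τ (mem_filter.1 hl).2)
  · by_contra! hunder
    refine (hfew _ (filter_subset _ _) fun l hl => ?_).not_gt (hcard ▸ lt_sub_comm.1 hN0hi)
    rw [(mem_filter.1 hl).2]
    exact hunder.le.trans (sub_le_sup'_sub_contractUtility_self w b τ hτ0)

/-- Binary search classification, combined: under the shortfall bound, if the number of
non-acceptance rounds N₀ satisfies C·N^{κ+β/α} < N₀ < N − C·N^{κ+β/α}, then the offered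
transfer is within 1/T^β of the optimal incentive. -/
theorem classification_combined {A : Type*} [Fintype A] [Nonempty A] [DecidableEq A]
    (C κ α β T : ℝ) (hC : 0 < C) (hκ0 : 0 ≤ κ) (hκ1 : κ < 1) (hα : 0 < α) (hβ : 0 < β)
    (hβα : β < α * (1 - κ)) (hT : 1 ≤ T)
    (w : A → ℝ) (b : A) (τ : ℝ) (act : ℕ → A) (hτ0 : 0 ≤ τ)
    (hshort : ∑ l ∈ Finset.Icc 1 ⌈T ^ α⌉₊,
        (Finset.univ.sup' Finset.univ_nonempty (fun a => w a + if a = b then τ else 0)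
          - (w (act l) + if act l = b then τ else 0))
      ≤ C * ((⌈T ^ α⌉₊ : ℝ)) ^ κ)
    (hN0lo : C * ((⌈T ^ α⌉₊ : ℝ)) ^ (κ + β / α)
      < (((Finset.Icc 1 ⌈T ^ α⌉₊).filter (fun l => act l ≠ b)).card : ℝ))
    (hN0hi : (((Finset.Icc 1 ⌈T ^ α⌉₊).filter (fun l => act l ≠ b)).card : ℝ)
      < (⌈T ^ α⌉₊ : ℝ) - C * ((⌈T ^ α⌉₊ : ℝ)) ^ (κ + β / α)) :
    |τ - (Finset.univ.sup' Finset.univ_nonempty w - w b)| ≤ 1 / T ^ β :=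
  classification_combined_general C κ α β T hC hα hβ hT w b τ act hτ0 hshort hN0lo hN0hi
end
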